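/- arXiv:1609.05839 — 5 statements merged into one kernel-verified Lean document; each statement's English description precedes it below -/
import Mathlib

section
/- The function V(i,j) = (i+1)(j+1)(i+j+2)(i+2j+3)/6 on ℕ² (extended by V(i,j) = 0 when i < 0 or j < 0) satisfies the discrete harmonicity equation 4·V(i,j) = V(i−1,j) + V(i−1,j+1) + V(i+1,j) + V(i+1,j−1) for all integers i, j ≥ 0. -/
/-- The function `V(i,j) = (i+1)(j+1)(i+j+2)(i+2j+3)/6`, extended by `0` outside `ℕ²`,
is discrete harmonic for the unweighted Gouyou-Beauchamps model. -/
theorem gb_harmonic_function (V : ℤ → ℤ → ℚ)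
    (hV : ∀ i j : ℤ, V i j =
      if i < 0 ∨ j < 0 then 0
      else ((i : ℚ) + 1) * ((j : ℚ) + 1) * ((i : ℚ) + (j : ℚ) + 2) *
        ((i : ℚ) + 2 * (j : ℚ) + 3) / 6)
    (i j : ℤ) (hi : 0 ≤ i) (hj : 0 ≤ j) :
    4 * V i j = V (i - 1) j + V (i - 1) (j + 1) + V (i + 1) j + V (i + 1) (j - 1) := by
  rw [hV i j, hV (i-1) j, hV (i-1) (j+1), hV (i+1) j, hV (i+1) (j-1)]
  rw [if_neg (by omega : ¬(i < 0 ∨ j < 0)), if_neg (by omega : ¬(i + 1 < 0 ∨ j < 0))]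
  by_cases hi0 : i = 0
  · subst hi0
    rw [if_pos (by omega : (0:ℤ) - 1 < 0 ∨ j < 0),
        if_pos (by omega : (0:ℤ) - 1 < 0 ∨ j + 1 < 0)]
    by_cases hj0 : j = 0
    · subst hj0
      rw [if_pos (by omega : (0:ℤ) + 1 < 0 ∨ (0:ℤ) - 1 < 0)]
      norm_num
    · rw [if_neg (by omega : ¬((0:ℤ) + 1 < 0 ∨ j - 1 < 0))]
      push_cast
      ring
  · rw [if_neg (by omega : ¬(i - 1 < 0 ∨ j < 0)),
        if_neg (by omega : ¬(i - 1 < 0 ∨ j + 1 < 0))]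
    by_cases hj0 : j = 0
    · subst hj0
      rw [if_pos (by omega : i + 1 < 0 ∨ (0:ℤ) - 1 < 0)]
      push_cast
      ring
    · rw [if_neg (by omega : ¬(i + 1 < 0 ∨ j - 1 < 0))]
      push_cast
      ring
end

section
/- Fix positive reals a, b with a < 1 and b < 1. Define V(i,j) = 0 for i < 0 or j < 0, and for i, j ≥ 0 define V^{[n]}(i,j) = ((1+j)(1+i)(3+i+2j)(2+i+j)/(a^i b^j)) · (C₊ + (−1)^{n+i} C₋), where C₊ = (a²b²+a²b−4ab+b+1)/(a−1)⁴ and C₋ = (a²b²+a²b+4ab+b+1)/(a+1)⁴. Then this caloric function satisfies 4·V^{[n+1]}(i,j) = (1/a)V^{[n]}(i−1,j) + (b/a)V^{[n]}(i−1,j+1) + a·V^{[n]}(i+1,j) + (a/b)·V^{[n]}(i+1,j−1) for all i, j ≥ 0 and all n. -/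
/-- The caloric function for the reluctant regime of the weighted Gouyou-Beauchamps model
satisfies the discrete 4-harmonicity equation. -/
theorem gb_reluctant_caloric (a b : ℝ) (ha : 0 < a) (hb : 0 < b)
    (ha1 : a < 1) (hb1 : b < 1)
    (V : ℕ → ℤ → ℤ → ℝ)
    (hV : ∀ (n : ℕ) (i j : ℤ), V n i j =
      if i < 0 ∨ j < 0 then 0
      else ((1 + (j : ℝ)) * (1 + (i : ℝ)) * (3 + (i : ℝ) + 2 * (j : ℝ)) *
          (2 + (i : ℝ) + (j : ℝ)) / (a ^ i * b ^ j)) *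
        ((a ^ 2 * b ^ 2 + a ^ 2 * b - 4 * a * b + b + 1) / (a - 1) ^ 4 +
          (-1 : ℝ) ^ ((n : ℤ) + i) *
            ((a ^ 2 * b ^ 2 + a ^ 2 * b + 4 * a * b + b + 1) / (a + 1) ^ 4)))
    (n : ℕ) (i j : ℤ) (hi : 0 ≤ i) (hj : 0 ≤ j) :
    4 * V (n + 1) i j =
      (1 / a) * V n (i - 1) j + (b / a) * V n (i - 1) (j + 1) +
        a * V n (i + 1) j + (a / b) * V n (i + 1) (j - 1) := by
  have ha0 : a ≠ 0 := ne_of_gt ha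
  have hb0 : b ≠ 0 := ne_of_gt hb
  set C1 : ℝ := (a ^ 2 * b ^ 2 + a ^ 2 * b - 4 * a * b + b + 1) / (a - 1) ^ 4 with hC1
  set C2 : ℝ := (a ^ 2 * b ^ 2 + a ^ 2 * b + 4 * a * b + b + 1) / (a + 1) ^ 4 with hC2
  have key : ∀ (m : ℕ) (k l : ℤ), -1 ≤ k → -1 ≤ l → V m k l =
      ((1 + (l : ℝ)) * (1 + (k : ℝ)) * (3 + (k : ℝ) + 2 * (l : ℝ)) *
          (2 + (k : ℝ) + (l : ℝ)) / (a ^ k * b ^ l)) *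
        (C1 + (-1 : ℝ) ^ ((m : ℤ) + k) * C2) := by
    intro m k l hk hl
    rw [hV]
    split
    · rename_i h
      rcases h with h | h
      · have hk1 : k = -1 := le_antisymm (by omega) hk
        subst hk1
        norm_num
      · have hl1 : l = -1 := le_antisymm (by omega) hl
        subst hl1
        norm_num
    · rfl
  rw [key (n+1) i j (by omega) (by omega),
      key n (i-1) j (by omega) (by omega),
      key n (i-1) (j+1) (by omega) (by omega),
      key n (i+1) j (by omega) (by omega),
      key n (i+1) (j-1) (by omega) (by omega)]
  have hm1 : (-1 : ℝ) ≠ 0 := by norm_num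
  have hS1 : (-1 : ℝ) ^ (((n+1 : ℕ) : ℤ) + i) = -((-1 : ℝ) ^ ((n : ℤ) + i)) := by
    push_cast
    rw [show (n : ℤ) + 1 + i = ((n : ℤ) + i) + 1 by ring, zpow_add_one₀ hm1]
    ring
  have hS2 : (-1 : ℝ) ^ ((n : ℤ) + (i - 1)) = -((-1 : ℝ) ^ ((n : ℤ) + i)) := by
    rw [show (n : ℤ) + (i - 1) = ((n : ℤ) + i) - 1 by ring, zpow_sub_one₀ hm1]
    norm_num
  have hS3 : (-1 : ℝ) ^ ((n : ℤ) + (i + 1)) = -((-1 : ℝ) ^ ((n : ℤ) + i)) := by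
    rw [show (n : ℤ) + (i + 1) = ((n : ℤ) + i) + 1 by ring, zpow_add_one₀ hm1]
    ring
  have hA1 : a ^ (i - 1) = a ^ i * a⁻¹ := by rw [zpow_sub_one₀ ha0]
  have hA2 : a ^ (i + 1) = a ^ i * a := by rw [zpow_add_one₀ ha0]
  have hB1 : b ^ (j - 1) = b ^ j * b⁻¹ := by rw [zpow_sub_one₀ hb0]
  have hB2 : b ^ (j + 1) = b ^ j * b := by rw [zpow_add_one₀ hb0]
  have hA0 : a ^ i ≠ 0 := zpow_ne_zero i ha0
  have hB0 : b ^ j ≠ 0 := zpow_ne_zero j hb0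
  rw [hS1, hS2, hS3, hA1, hA2, hB1, hB2]
  push_cast
  field_simp
  ring
end

section
/- Let S(x,y) = Σ_{s∈S} a_s x^{π₁(s)} y^{π₂(s)} be the inventory of a two-dimensional model with central weighting a_s = β α₁^{π₁(s)} α₂^{π₂(s)}, and let S₀ be the unweighted inventory. Suppose (x₀,y₀) is the unique positive critical point of S₀ and (x_s,y_s) that of S. Then (x_s, y_s) = (x₀/α₁, y₀/α₂), and the covariance factor c = S_{xy}(x_s,y_s)/√(S_{xx}(x_s,y_s)·S_{yy}(x_s,y_s)) equals the covariance factor computed from S₀ at (x₀,y₀); i.e., c does not depend on the weights β, α₁, α₂. -/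
/-!
Since `(α₁ x) ^ i (α₂ y) ^ j = α₁ ^ i α₂ ^ j x ^ i y ^ j`, the weighted inventory is the rescaling
`S(x, y) = β S₀(α₁ x, α₂ y)`. By the chain rule its first partials are those of `S₀` at
`(α₁ x, α₂ y)` times `β α₁` resp. `β α₂`, so the positive critical points correspond under
`(x, y) ↦ (α₁ x, α₂ y)`. The second partials `S_xx`, `S_yy`, `S_xy` pick up the factors
`β α₁²`, `β α₂²`, `β α₁ α₂`, and the positive factor `β α₁ α₂` cancels in `c`.
-/

open Finset

def IsCriticalPoint (F : ℝ → ℝ → ℝ) (x y : ℝ) : Prop :=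
  deriv (fun x' => F x' y) x = 0 ∧ deriv (fun y' => F x y') y = 0

noncomputable def covarianceFactor (F : ℝ → ℝ → ℝ) (x y : ℝ) : ℝ :=
  deriv (fun y' => deriv (fun x' => F x' y') x) y /
    √(deriv (deriv fun x' => F x' y) x * deriv (deriv fun y' => F x y') y)

theorem central_weighting_inventory_eq (S : Finset (ℤ × ℤ)) (β α₁ α₂ x y : ℝ) :
    ∑ s ∈ S, (β * α₁ ^ s.1 * α₂ ^ s.2) * x ^ s.1 * y ^ s.2 =
      β * ∑ s ∈ S, (α₁ * x) ^ s.1 * (α₂ * y) ^ s.2 := by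
  rw [mul_sum]
  refine sum_congr rfl fun s _ => ?_
  rw [mul_zpow, mul_zpow]
  ring

section Rescaling

variable (f : ℝ → ℝ) (F : ℝ → ℝ → ℝ)

theorem deriv_const_mul_comp_mul_left (c a x : ℝ) :
    deriv (fun x => c * f (a * x)) x = c * a * deriv f (a * x) := by
  rw [deriv_const_mul_field, deriv_comp_mul_left, smul_eq_mul, mul_assoc]

theorem deriv_deriv_const_mul_comp_mul_left (c a x : ℝ) :
    deriv (deriv fun x => c * f (a * x)) x = c * a ^ 2 * deriv (deriv f) (a * x) := by
  have hderiv : deriv (fun x => c * f (a * x)) = fun x => c * a * deriv f (a * x) :=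
    funext (deriv_const_mul_comp_mul_left f c a)
  rw [hderiv, deriv_const_mul_comp_mul_left]
  ring

theorem deriv_deriv_fst_const_mul_comp_mul (c a b x y : ℝ) :
    deriv (fun y' => deriv (fun x' => c * F (a * x') (b * y')) x) y =
      c * a * b * deriv (fun y' => deriv (fun x' => F x' y') (a * x)) (b * y) := by
  have hderiv : (fun y' => deriv (fun x' => c * F (a * x') (b * y')) x) =
      fun y' => c * a * deriv (fun u => F u (b * y')) (a * x) :=
    funext fun y' => deriv_const_mul_comp_mul_left (fun u => F u (b * y')) c a x
  rw [hderiv]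
  exact deriv_const_mul_comp_mul_left (fun v => deriv (fun u => F u v) (a * x)) (c * a) b y

variable {F}

theorem isCriticalPoint_const_mul_comp_mul_iff {c a b : ℝ} (hc : c ≠ 0) (ha : a ≠ 0)
    (hb : b ≠ 0) (x y : ℝ) :
    IsCriticalPoint (fun x y => c * F (a * x) (b * y)) x y ↔
      IsCriticalPoint F (a * x) (b * y) := by
  simp only [IsCriticalPoint]
  rw [deriv_const_mul_comp_mul_left (fun u => F u (b * y)),
    deriv_const_mul_comp_mul_left (F (a * x))]
  simp [hc, ha, hb]

theorem covarianceFactor_const_mul_comp_mul {c a b : ℝ} (habc : 0 < c * a * b) (x y : ℝ) :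
    covarianceFactor (fun x y => c * F (a * x) (b * y)) x y =
      covarianceFactor F (a * x) (b * y) := by
  simp only [covarianceFactor]
  rw [deriv_deriv_fst_const_mul_comp_mul,
    deriv_deriv_const_mul_comp_mul_left (fun u => F u (b * y)),
    deriv_deriv_const_mul_comp_mul_left (F (a * x))]
  set M := deriv (fun y' => deriv (fun x' => F x' y') (a * x)) (b * y)
  set A := deriv (deriv fun u => F u (b * y)) (a * x)
  set B := deriv (deriv (F (a * x))) (b * y)
  calc c * a * b * M / √(c * a ^ 2 * A * (c * b ^ 2 * B))
      = c * a * b * M / (c * a * b * √(A * B)) := by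
        rw [show c * a ^ 2 * A * (c * b ^ 2 * B) = (c * a * b) ^ 2 * (A * B) by ring,
          Real.sqrt_mul (sq_nonneg _), Real.sqrt_sq habc.le]
    _ = M / √(A * B) := mul_div_mul_left _ _ habc.ne'

end Rescaling

theorem covariance_factor_weight_independent_general
    (S : Finset (ℤ × ℤ)) (β α₁ α₂ : ℝ) (hβ : 0 < β) (hα₁ : 0 < α₁) (hα₂ : 0 < α₂)
    (S₀ Sw : ℝ → ℝ → ℝ)
    (hS₀ : ∀ x y, S₀ x y = ∑ s ∈ S, x ^ s.1 * y ^ s.2)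
    (hSw : ∀ x y, Sw x y = ∑ s ∈ S, (β * α₁ ^ s.1 * α₂ ^ s.2) * x ^ s.1 * y ^ s.2)
    (x₀ y₀ : ℝ)
    (hcrit : deriv (fun x => S₀ x y₀) x₀ = 0 ∧ deriv (fun y => S₀ x₀ y) y₀ = 0)
    (huniq : ∀ x y : ℝ, 0 < x → 0 < y →
      deriv (fun x' => S₀ x' y) x = 0 → deriv (fun y' => S₀ x y') y = 0 →
      x = x₀ ∧ y = y₀) :
    (deriv (fun x => Sw x (y₀ / α₂)) (x₀ / α₁) = 0 ∧
      deriv (fun y => Sw (x₀ / α₁) y) (y₀ / α₂) = 0) ∧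
    (∀ x y : ℝ, 0 < x → 0 < y →
      deriv (fun x' => Sw x' y) x = 0 → deriv (fun y' => Sw x y') y = 0 →
      x = x₀ / α₁ ∧ y = y₀ / α₂) ∧
    (deriv (fun y => deriv (fun x => Sw x y) (x₀ / α₁)) (y₀ / α₂) /
        Real.sqrt
          (deriv (deriv (fun x => Sw x (y₀ / α₂))) (x₀ / α₁) *
            deriv (deriv (fun y => Sw (x₀ / α₁) y)) (y₀ / α₂)) =
      deriv (fun y => deriv (fun x => S₀ x y) x₀) y₀ /
        Real.sqrt
          (deriv (deriv (fun x => S₀ x y₀)) x₀ *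
            deriv (deriv (fun y => S₀ x₀ y)) y₀)) := by
  obtain rfl : Sw = fun x y => β * S₀ (α₁ * x) (α₂ * y) := funext₂ fun x y => by
    rw [hSw, hS₀, central_weighting_inventory_eq]
  have hx₀ : α₁ * (x₀ / α₁) = x₀ := mul_div_cancel₀ x₀ hα₁.ne'
  have hy₀ : α₂ * (y₀ / α₂) = y₀ := mul_div_cancel₀ y₀ hα₂.ne'
  have hcrit_iff := isCriticalPoint_const_mul_comp_mul_iff (F := S₀) hβ.ne' hα₁.ne' hα₂.ne'
  refine ⟨?_, fun x y hx hy hx' hy' => ?_, ?_⟩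
  · exact (hcrit_iff _ _).2 (by rwa [hx₀, hy₀])
  · have hcrit_scaled := (hcrit_iff x y).1 ⟨hx', hy'⟩
    obtain ⟨rfl, rfl⟩ :=
      huniq _ _ (mul_pos hα₁ hx) (mul_pos hα₂ hy) hcrit_scaled.1 hcrit_scaled.2
    exact ⟨(mul_div_cancel_left₀ x hα₁.ne').symm, (mul_div_cancel_left₀ y hα₂.ne').symm⟩
  · have hfactor := covarianceFactor_const_mul_comp_mul (F := S₀)
      (by positivity : 0 < β * α₁ * α₂) (x₀ / α₁) (y₀ / α₂)
    rwa [hx₀, hy₀] at hfactor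

/-- For a centrally weighted 2D model, the positive critical point of the weighted
inventory is `(x₀/α₁, y₀/α₂)` where `(x₀,y₀)` is that of the unweighted inventory, and
the covariance factor `c = S_xy/√(S_xx S_yy)` at the critical point is independent of
the weights. -/
theorem covariance_factor_weight_independent
    (S : Finset (ℤ × ℤ)) (β α₁ α₂ : ℝ) (hβ : 0 < β) (hα₁ : 0 < α₁) (hα₂ : 0 < α₂)
    (S₀ Sw : ℝ → ℝ → ℝ)
    (hS₀ : ∀ x y, S₀ x y = ∑ s ∈ S, x ^ s.1 * y ^ s.2)
    (hSw : ∀ x y, Sw x y = ∑ s ∈ S, (β * α₁ ^ s.1 * α₂ ^ s.2) * x ^ s.1 * y ^ s.2)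
    (x₀ y₀ : ℝ) (hx₀ : 0 < x₀) (hy₀ : 0 < y₀)
    (hcrit : deriv (fun x => S₀ x y₀) x₀ = 0 ∧ deriv (fun y => S₀ x₀ y) y₀ = 0)
    (huniq : ∀ x y : ℝ, 0 < x → 0 < y →
      deriv (fun x' => S₀ x' y) x = 0 → deriv (fun y' => S₀ x y') y = 0 →
      x = x₀ ∧ y = y₀) :
    (deriv (fun x => Sw x (y₀ / α₂)) (x₀ / α₁) = 0 ∧
      deriv (fun y => Sw (x₀ / α₁) y) (y₀ / α₂) = 0) ∧
    (∀ x y : ℝ, 0 < x → 0 < y →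
      deriv (fun x' => Sw x' y) x = 0 → deriv (fun y' => Sw x y') y = 0 →
      x = x₀ / α₁ ∧ y = y₀ / α₂) ∧
    (deriv (fun y => deriv (fun x => Sw x y) (x₀ / α₁)) (y₀ / α₂) /
        Real.sqrt
          (deriv (deriv (fun x => Sw x (y₀ / α₂))) (x₀ / α₁) *
            deriv (deriv (fun y => Sw (x₀ / α₁) y)) (y₀ / α₂)) =
      deriv (fun y => deriv (fun x => S₀ x y) x₀) y₀ /
        Real.sqrt
          (deriv (deriv (fun x => S₀ x y₀)) x₀ *
            deriv (deriv (fun y => S₀ x₀ y)) y₀)) :=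
  covariance_factor_weight_independent_general S β α₁ α₂ hβ hα₁ hα₂ S₀ Sw hS₀ hSw x₀ y₀ hcrit huniq
end

section
/- Let S ⊂ {−1,0,1}^d be a step set of small steps containing the all-ones vector (1,1,...,1). Suppose (μ_s)_{s∈S} are real constants such that for every point (i₁,...,i_d) ∈ ℕ^d and every n ≥ 1, Σ_{s∈S} μ_s · w_{(i₁−π₁(s),...,i_d−π_d(s))}(n−1) = 0, where w_p(m) is the number of walks of m steps from the origin to p staying in ℕ^d (and w_p(m) = 0 if p ∉ ℕ^d). Then μ_s = 0 for every s ∈ S. -/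
open scoped Classical

/-- If a small-step model contains the all-ones step, then the only linear relation
`Σ_s μ_s w_{p - s}(n-1) = 0` among the shifted walk-counting sequences is the trivial
one. Here `w p m` counts walks of `m` steps from the origin to `p` staying in `ℕ^d`. -/
theorem small_steps_all_ones_conjecture (d : ℕ) (S : Finset (Fin d → ℤ))
    (hsmall : ∀ s ∈ S, ∀ k, s k ∈ ({-1, 0, 1} : Set ℤ))
    (hones : (fun _ => 1 : Fin d → ℤ) ∈ S)
    (w : (Fin d → ℤ) → ℕ → ℕ)
    (hw : ∀ (p : Fin d → ℤ) (m : ℕ), w p m =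
      (Finset.univ.filter
        (fun f : Fin m → {s // s ∈ S} =>
          (∀ l, ∑ k, ((f k : Fin d → ℤ)) l = p l) ∧
          ∀ m' : Fin m, ∀ l,
            0 ≤ ∑ k ∈ Finset.univ.filter (fun k : Fin m => k ≤ m'), ((f k : Fin d → ℤ)) l)).card)
    (μ : (Fin d → ℤ) → ℝ)
    (hμ : ∀ (i : Fin d → ℕ) (n : ℕ), 1 ≤ n →
      ∑ s ∈ S, μ s * (w (fun l => (i l : ℤ) - s l) (n - 1) : ℝ) = 0) :
    ∀ s ∈ S, μ s = 0 := by
  have hbound : ∀ s ∈ S, ∀ k, -1 ≤ s k ∧ s k ≤ 1 := by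
    intro s hs k
    have := hsmall s hs k
    simp only [Set.mem_insert_iff, Set.mem_singleton_iff] at this
    omega
  -- w p 1 = 1 when p ∈ S and p ≥ 0
  have hw1 : ∀ p : Fin d → ℤ, p ∈ S → (∀ l, 0 ≤ p l) → w p 1 = 1 := by
    intro p hp hpos
    rw [hw, Finset.card_eq_one]
    refine ⟨fun _ => ⟨p, hp⟩, ?_⟩
    ext f
    simp only [Finset.mem_filter, Finset.mem_univ, true_and, Finset.mem_singleton,
      Fin.sum_univ_one]
    constructor
    · rintro ⟨h1, _⟩
      funext k
      have : (f 0 : Fin d → ℤ) = p := funext fun l => h1 l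
      have hk : k = 0 := Subsingleton.elim _ _
      rw [hk]
      exact Subtype.ext this
    · rintro rfl
      refine ⟨fun l => rfl, ?_⟩
      intro m' l
      have hm : m' = 0 := Subsingleton.elim _ _
      subst hm
      have : (Finset.univ.filter (fun k : Fin 1 => k ≤ 0)) = Finset.univ := by
        ext k; simp [Subsingleton.elim k 0]
      rw [this, Fin.sum_univ_one]
      exact hpos l
  -- w p 1 = 0 when some coordinate exceeds 1
  have hw0 : ∀ p : Fin d → ℤ, (∃ l, 1 < p l) → w p 1 = 0 := by
    intro p ⟨l, hl⟩
    rw [hw, Finset.card_eq_zero]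
    ext f
    simp only [Finset.mem_filter, Finset.mem_univ, true_and, Finset.notMem_empty,
      iff_false, not_and]
    intro h1 _
    have := h1 l
    rw [Fin.sum_univ_one] at this
    have := (hbound _ (f 0).2 l).2
    omega
  -- main induction
  have key : ∀ N : ℕ, ∀ s₀ ∈ S, (∑ l, (1 - s₀ l)) = N → μ s₀ = 0 := by
    intro N
    induction N using Nat.strong_induction_on with
    | _ N ih =>
      intro s₀ hs₀ hMs₀
      set i : Fin d → ℕ := fun l => (1 + s₀ l).toNat with hidef
      have hi : ∀ l, (i l : ℤ) = 1 + s₀ l := by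
        intro l
        have := (hbound s₀ hs₀ l).1
        simp only [hidef]
        omega
      have hrel := hμ i 2 (by norm_num)
      rw [Finset.sum_eq_single s₀] at hrel
      · have hone : w (fun l => (i l : ℤ) - s₀ l) 1 = 1 := by
          have heq : (fun l => (i l : ℤ) - s₀ l) = (fun _ => 1 : Fin d → ℤ) := by
            funext l; rw [hi]; ring
          rw [heq]
          exact hw1 _ hones (fun _ => by norm_num)
        simpa [hone] using hrel
      · intro s hs hne
        by_cases hge : ∀ l, s₀ l ≤ s l
        · have hlt : (∑ l, (1 - s l)) < (∑ l, (1 - s₀ l)) := by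
            have hex : ∃ l, s₀ l < s l := by
              by_contra hc
              push_neg at hc
              exact hne (funext fun l => le_antisymm (hc l) (hge l))
            obtain ⟨l₀, hl₀⟩ := hex
            exact Finset.sum_lt_sum (fun l _ => by have := hge l; omega)
              ⟨l₀, Finset.mem_univ _, by omega⟩
          have hnn : 0 ≤ ∑ l, (1 - s l) :=
            Finset.sum_nonneg fun l _ => by have := (hbound s hs l).2; omega
          have hμs : μ s = 0 := by
            refine ih (∑ l, (1 - s l)).toNat ?_ s hs ?_
            · omega
            · omega
          simp [hμs]
        · push_neg at hge
          obtain ⟨l, hl⟩ := hge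
          have hz : w (fun l => (i l : ℤ) - s l) 1 = 0 := by
            refine hw0 _ ⟨l, ?_⟩
            rw [hi]
            omega
          simp [hz]
      · intro h; exact absurd hs₀ h
  intro s hs
  have hnn : 0 ≤ ∑ l, (1 - s l) :=
    Finset.sum_nonneg fun l _ => by have := (hbound s hs l).2; omega
  exact key (∑ l, (1 - s l)).toNat s hs (by omega)
end

section
/- Fix positive reals a, b. The minimum of S(x,y) = a/x + (a y)/(b x) + (b x)/(a y) + x/a over the square (x,y) ∈ (0,1]² is attained at an interior critical point (namely (x,y)=(a,b), where ∇S = 0) if and only if a ≤ 1 and b ≤ 1; when a > 1 or b > 1 the minimum over (0,1]² is attained on the boundary x = 1 or y = 1. -/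
/-!
With `g t = t + t⁻¹` (`plusRecip`) one has `S x y = g (x / a) + g (a y / (b x))`. Since `g ≥ 2 = g 1`, the point
`(a, b)` is a global minimum of `S` on the open quadrant, hence a critical point, and it lies in
`(0, 1]²` iff `a, b ≤ 1`. Otherwise, as `g` is antitone on `(0, 1]`: if `b ≤ a` the minimum is at
`(1, b / a)`; if `a < b` every value is dominated by one on the edge `y = 1`, where
`S x 1 = g √b * g (√b x / a)` is minimal at `x = min (a / √b) 1`.
-/

open Set Filter

noncomputable def plusRecip (t : ℝ) : ℝ := t + t⁻¹

lemma plusRecip_one : plusRecip 1 = 2 := by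
  norm_num [plusRecip]

lemma two_le_plusRecip {t : ℝ} (ht : 0 < t) : 2 ≤ plusRecip t := by
  rw [plusRecip, ← sub_nonneg]
  have key : t + t⁻¹ - 2 = (t - 1) ^ 2 / t := by field_simp; ring
  rw [key]
  positivity

lemma plusRecip_antitoneOn : AntitoneOn plusRecip (Ioc 0 1) := by
  rintro t ⟨ht, -⟩ u ⟨hu, hu1⟩ htu
  rw [plusRecip, plusRecip, ← sub_nonneg]
  have key : t + t⁻¹ - (u + u⁻¹) = (u - t) * (1 - t * u) / (t * u) := by field_simp; ring
  rw [key]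
  have htu1 : t * u ≤ 1 := by nlinarith
  exact div_nonneg (mul_nonneg (by linarith) (by linarith)) (by positivity)

noncomputable def gbInventory (a b x y : ℝ) : ℝ :=
  a / x + a * y / (b * x) + b * x / (a * y) + x / a

lemma gbInventory_eq (a b x y : ℝ) :
    gbInventory a b x y = plusRecip (x / a) + plusRecip (a * y / (b * x)) := by
  simp only [gbInventory, plusRecip, inv_div]
  ring

lemma gbInventory_one_right {a b : ℝ} (hb : 0 < b) (x : ℝ) :
    gbInventory a b x 1 = plusRecip √b * plusRecip (√b * x / a) := by
  obtain ⟨s, hs, rfl⟩ : ∃ s, 0 < s ∧ b = s ^ 2 := ⟨√b, Real.sqrt_pos.2 hb, (Real.sq_sqrt hb.le).symm⟩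
  rw [Real.sqrt_sq hs.le]
  simp only [gbInventory, plusRecip, inv_div]
  field_simp
  ring

lemma gbInventory_self {a b : ℝ} (ha : 0 < a) (hb : 0 < b) : gbInventory a b a b = 4 := by
  rw [gbInventory_eq, div_self ha.ne', mul_comm b a, div_self (mul_pos ha hb).ne', plusRecip_one]
  norm_num

lemma four_le_gbInventory {a b x y : ℝ} (ha : 0 < a) (hb : 0 < b) (hx : 0 < x) (hy : 0 < y) :
    4 ≤ gbInventory a b x y := by
  rw [gbInventory_eq]
  linarith [two_le_plusRecip (div_pos hx ha), two_le_plusRecip (by positivity : 0 < a * y / (b * x))]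

lemma gbInventory_max_one_le {a b x y : ℝ} (ha : 0 < a) (hb1 : 1 ≤ b) (hx : 0 < x) (hy : 0 < y)
    (hy1 : y ≤ 1) : gbInventory a b (max x (a / b)) 1 ≤ gbInventory a b x y := by
  have hb : 0 < b := one_pos.trans_le hb1
  rw [gbInventory_eq, gbInventory_eq]
  rcases le_total (a / b) x with hxab | hxab
  · rw [max_eq_left hxab, mul_one]
    have hq1 : a / (b * x) ≤ 1 := by
      rw [div_le_one (by positivity)]; rwa [div_le_iff₀ hb, mul_comm] at hxab
    have hq : a * y / (b * x) ≤ a / (b * x) :=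
      div_le_div_of_nonneg_right (mul_le_of_le_one_right ha.le hy1) (by positivity)
    exact add_le_add le_rfl (plusRecip_antitoneOn ⟨by positivity, hq.trans hq1⟩ ⟨by positivity, hq1⟩ hq)
  · rw [max_eq_right hxab, mul_one, mul_div_cancel₀ _ hb.ne', div_self ha.ne', plusRecip_one]
    have hxa : x / a ≤ a / b / a := div_le_div_of_nonneg_right hxab ha.le
    have hb' : a / b / a ≤ 1 := by
      rw [div_div_cancel_left' ha.ne']; exact inv_le_one_of_one_le₀ hb1
    exact add_le_add (plusRecip_antitoneOn ⟨div_pos hx ha, hxa.trans hb'⟩ ⟨by positivity, hb'⟩ hxa)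
      (two_le_plusRecip (by positivity))

lemma gbInventory_one_div_le {a b x y : ℝ} (ha1 : 1 ≤ a) (hb : 0 < b) (hx : 0 < x) (hx1 : x ≤ 1)
    (hy : 0 < y) : gbInventory a b 1 (b / a) ≤ gbInventory a b x y := by
  have ha : 0 < a := one_pos.trans_le ha1
  rw [gbInventory_eq, gbInventory_eq, mul_div_cancel₀ _ ha.ne', mul_one, div_self hb.ne',
    plusRecip_one]
  have hxa : x / a ≤ 1 / a := div_le_div_of_nonneg_right hx1 ha.le
  have ha' : 1 / a ≤ 1 := by rwa [div_le_one ha]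
  exact add_le_add (plusRecip_antitoneOn ⟨div_pos hx ha, hxa.trans ha'⟩ ⟨by positivity, ha'⟩ hxa)
    (two_le_plusRecip (by positivity))

lemma gbInventory_div_sqrt_le {a b x y : ℝ} (ha : 0 < a) (hb1 : 1 ≤ b) (hx : 0 < x) (hy : 0 < y)
    (hy1 : y ≤ 1) : gbInventory a b (a / √b) 1 ≤ gbInventory a b x y := by
  have hb : 0 < b := one_pos.trans_le hb1
  have hs : 0 < √b := Real.sqrt_pos.2 hb
  calc gbInventory a b (a / √b) 1 = plusRecip √b * 2 := by
        rw [gbInventory_one_right hb, mul_div_cancel₀ _ hs.ne', div_self ha.ne', plusRecip_one]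
    _ ≤ plusRecip √b * plusRecip (√b * max x (a / b) / a) :=
        mul_le_mul_of_nonneg_left (two_le_plusRecip (by positivity))
          (zero_le_two.trans (two_le_plusRecip hs))
    _ = gbInventory a b (max x (a / b)) 1 := (gbInventory_one_right hb _).symm
    _ ≤ gbInventory a b x y := gbInventory_max_one_le ha hb1 hx hy hy1

lemma gbInventory_one_one_le {a b x y : ℝ} (ha : 0 < a) (hb1 : 1 ≤ b) (hab : a ≤ b)
    (hsa : √b ≤ a) (hx : 0 < x) (hx1 : x ≤ 1) (hy : 0 < y) (hy1 : y ≤ 1) :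
    gbInventory a b 1 1 ≤ gbInventory a b x y := by
  have hb : 0 < b := one_pos.trans_le hb1
  have hs : 0 < √b := Real.sqrt_pos.2 hb
  have hm1 : max x (a / b) ≤ 1 := max_le hx1 ((div_le_one hb).2 hab)
  have hle : √b * max x (a / b) / a ≤ √b * 1 / a := by gcongr
  have hle1 : √b * 1 / a ≤ 1 := by rwa [mul_one, div_le_one ha]
  calc gbInventory a b 1 1 = plusRecip √b * plusRecip (√b * 1 / a) := gbInventory_one_right hb 1
    _ ≤ plusRecip √b * plusRecip (√b * max x (a / b) / a) :=
        mul_le_mul_of_nonneg_left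
          (plusRecip_antitoneOn ⟨by positivity, hle.trans hle1⟩ ⟨by positivity, hle1⟩ hle)
          (zero_le_two.trans (two_le_plusRecip hs))
    _ = gbInventory a b (max x (a / b)) 1 := (gbInventory_one_right hb _).symm
    _ ≤ gbInventory a b x y := gbInventory_max_one_le ha hb1 hx hy hy1

/-- Dichotomy for the location of the minimum of the reciprocal weighted GB inventory
`S(x,y) = a/x + ay/(bx) + bx/(ay) + x/a` on `(0,1]²`: the point `(a,b)` is a critical
point of `S`, the minimum is attained at this interior critical point iff `a ≤ 1` and
`b ≤ 1`, and otherwise the minimum is attained on the boundary `x = 1` or `y = 1`. -/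
theorem gb_min_location_dichotomy (a b : ℝ) (ha : 0 < a) (hb : 0 < b)
    (S : ℝ → ℝ → ℝ)
    (hS : ∀ x y, S x y = a / x + (a * y) / (b * x) + (b * x) / (a * y) + x / a) :
    (deriv (fun x => S x b) a = 0 ∧ deriv (fun y => S a y) b = 0) ∧
    ((a ≤ 1 ∧ b ≤ 1) ↔
      (a ≤ 1 ∧ b ≤ 1 ∧
        ∀ x y : ℝ, 0 < x → x ≤ 1 → 0 < y → y ≤ 1 → S a b ≤ S x y)) ∧
    ((1 < a ∨ 1 < b) →
      ∃ x y : ℝ, 0 < x ∧ x ≤ 1 ∧ 0 < y ∧ y ≤ 1 ∧ (x = 1 ∨ y = 1) ∧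
        ∀ x' y' : ℝ, 0 < x' → x' ≤ 1 → 0 < y' → y' ≤ 1 → S x y ≤ S x' y') := by
  obtain rfl : S = gbInventory a b := funext₂ hS
  have hmin : ∀ x y, 0 < x → 0 < y → gbInventory a b a b ≤ gbInventory a b x y := fun x y hx hy =>
    (gbInventory_self ha hb).trans_le (four_le_gbInventory ha hb hx hy)
  refine ⟨⟨?_, ?_⟩, ⟨fun h => ⟨h.1, h.2, fun x y hx _ hy _ => hmin x y hx hy⟩,
    fun h => ⟨h.1, h.2.1⟩⟩, fun h => ?_⟩
  · exact IsLocalMin.deriv_eq_zero (mem_of_superset (Ioi_mem_nhds ha) fun x hx => hmin x b hx hb)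
  · exact IsLocalMin.deriv_eq_zero (mem_of_superset (Ioi_mem_nhds hb) fun y hy => hmin a y ha hy)
  rcases le_or_gt b a with hba | hab
  · have ha1 : 1 ≤ a := (h.elim id fun hb1 => hb1.trans_le hba).le
    exact ⟨1, b / a, one_pos, le_rfl, div_pos hb ha, (div_le_one ha).2 hba, Or.inl rfl,
      fun x y hx hx1 hy _ => gbInventory_one_div_le ha1 hb hx hx1 hy⟩
  have hb1 : 1 ≤ b := (h.elim (fun ha1 => ha1.trans hab) id).le
  rcases le_or_gt a √b with has | hsa
  · exact ⟨a / √b, 1, by positivity, (div_le_one (by positivity)).2 has, one_pos, le_rfl, Or.inr rfl,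
      fun x y hx _ hy hy1 => gbInventory_div_sqrt_le ha hb1 hx hy hy1⟩
  · exact ⟨1, 1, one_pos, le_rfl, one_pos, le_rfl, Or.inl rfl,
      fun x y hx hx1 hy hy1 => gbInventory_one_one_le ha hb1 hab.le hsa.le hx hx1 hy hy1⟩
end
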